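/- arXiv:2401.07555 — 2 statements merged into one kernel-verified Lean document; each statement's English description precedes it below -/
import Mathlib

section
/- Let A(ω, ρ, x) be the (n+1)×(n+1) matrix with entries A_{ℓ,k} = τ_ℓ^k((−1)^k + τ_ℓ^{n+1−k} c_{ℓ;k}(ω,x)) where τ_ℓ = ω σ_ℓ, σ_ℓ = 1 − ℓ(1−ρ)/n ∈ [ρ,1], and the functions c_{ℓ;k} are uniformly bounded on U for small ω. Then det A(ω,ρ,x) = ω^{n(n+1)/2}(∏_{0 ≤ j' < j ≤ n}(σ_{j'} − σ_j) + g(ω,x)) for some function g tending to zero uniformly on U as ω → 0; in particular, for ρ ∈ (0,1) fixed and all sufficiently small ω > 0, the matrix A(ω,ρ,x) is invertible for every x ∈ U. -/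
set_option maxHeartbeats 1000000

open Finset

lemma prod_sub_prod_bound {ι : Type*} [DecidableEq ι] (s : Finset ι) (f g : ι → ℝ) (R ε : ℝ)
    (hR : 1 ≤ R) (hε0 : 0 ≤ ε)
    (hf : ∀ i ∈ s, |f i| ≤ R) (hg : ∀ i ∈ s, |g i| ≤ R)
    (hfg : ∀ i ∈ s, |f i - g i| ≤ ε) :
    |∏ i ∈ s, f i - ∏ i ∈ s, g i| ≤ s.card * R ^ s.card * ε := by
  induction s using Finset.induction_on with
  | empty => simp
  | @insert a s ha ih =>
    have hR0 : (0:ℝ) ≤ R := le_trans zero_le_one hR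
    have hfa := hf a (mem_insert_self a s)
    have hga := hg a (mem_insert_self a s)
    have hfga := hfg a (mem_insert_self a s)
    have hf' : ∀ i ∈ s, |f i| ≤ R := fun i hi => hf i (mem_insert_of_mem hi)
    have hg' : ∀ i ∈ s, |g i| ≤ R := fun i hi => hg i (mem_insert_of_mem hi)
    have hfg' : ∀ i ∈ s, |f i - g i| ≤ ε := fun i hi => hfg i (mem_insert_of_mem hi)
    have IH := ih hf' hg' hfg'
    have hpf : |∏ i ∈ s, f i| ≤ R ^ s.card := by
      rw [abs_prod]
      calc ∏ i ∈ s, |f i| ≤ ∏ i ∈ s, R := Finset.prod_le_prod (fun i _ => abs_nonneg _) hf'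
        _ = R ^ s.card := by rw [prod_const]
    rw [prod_insert ha, prod_insert ha, card_insert_of_notMem ha]
    have key : f a * ∏ i ∈ s, f i - g a * ∏ i ∈ s, g i
        = (f a - g a) * ∏ i ∈ s, f i + g a * (∏ i ∈ s, f i - ∏ i ∈ s, g i) := by ring
    rw [key]
    have h1 : |(f a - g a) * ∏ i ∈ s, f i| ≤ ε * R ^ s.card := by
      rw [abs_mul]; exact mul_le_mul hfga hpf (abs_nonneg _) hε0
    have h2 : |g a * (∏ i ∈ s, f i - ∏ i ∈ s, g i)| ≤ R * (s.card * R ^ s.card * ε) := by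
      rw [abs_mul]
      exact mul_le_mul hga IH (abs_nonneg _) hR0
    have hpow : R ^ s.card ≤ R ^ (s.card + 1) := pow_le_pow_right₀ hR (by omega)
    calc |(f a - g a) * ∏ i ∈ s, f i + g a * (∏ i ∈ s, f i - ∏ i ∈ s, g i)|
        ≤ |(f a - g a) * ∏ i ∈ s, f i| + |g a * (∏ i ∈ s, f i - ∏ i ∈ s, g i)| := abs_add_le _ _
      _ ≤ ε * R ^ s.card + R * (s.card * R ^ s.card * ε) := add_le_add h1 h2
      _ ≤ ((s.card + 1 : ℕ) : ℝ) * R ^ (s.card + 1) * ε := by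
          have h3 : R * (s.card * R ^ s.card * ε) = s.card * R ^ (s.card+1) * ε := by ring
          have h4 : ε * R ^ s.card ≤ R ^ (s.card + 1) * ε := by
            rw [mul_comm]; exact mul_le_mul_of_nonneg_right hpow hε0
          rw [h3]; push_cast; nlinarith [pow_nonneg hR0 (s.card+1)]

/-- `σ_ℓ := 1 − ℓ(1−ρ)/n`. -/
noncomputable def sigmaNode (ρ : ℝ) (n : ℕ) (ℓ : Fin (n + 1)) : ℝ :=
  1 - (ℓ.val : ℝ) * (1 - ρ) / n

/-- The matrix with entries `A_{ℓ,k} = τ_ℓ^k ((−1)^k + τ_ℓ^{n+1−k} c_{ℓ;k}(ω,x))`,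
where `τ_ℓ = ω σ_ℓ`. -/
noncomputable def matA {α : Type*} (n : ℕ) (ρ : ℝ)
    (c : Fin (n + 1) → Fin (n + 1) → ℝ → α → ℝ) (ω : ℝ) (x : α) :
    Matrix (Fin (n + 1)) (Fin (n + 1)) ℝ :=
  Matrix.of fun ℓ k =>
    (ω * sigmaNode ρ n ℓ) ^ k.val *
      ((-1 : ℝ) ^ k.val + (ω * sigmaNode ρ n ℓ) ^ (n + 1 - k.val) * c ℓ k ω x)

/-- `det A(ω,ρ,x) = ω^{n(n+1)/2} (∏_{j'<j} (σ_{j'} − σ_j) + g(ω,x))` with `g → 0`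
uniformly on `U` as `ω → 0`; in particular `A(ω,ρ,x)` is invertible for every `x ∈ U`
and all sufficiently small `ω > 0`. -/
theorem stmt_10 {α : Type*} (n : ℕ) (hn : 1 ≤ n) (ρ : ℝ) (hρ : ρ ∈ Set.Ioo (0 : ℝ) 1)
    (U : Set α) (c : Fin (n + 1) → Fin (n + 1) → ℝ → α → ℝ)
    (C η : ℝ) (hη : 0 < η)
    (hc : ∀ (ℓ k : Fin (n + 1)), ∀ ω ∈ Set.Ioo (0 : ℝ) η, ∀ x ∈ U, |c ℓ k ω x| ≤ C) :
    ∃ g : ℝ → α → ℝ,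
      (∀ δ > (0 : ℝ), ∃ η' > (0 : ℝ), ∀ ω ∈ Set.Ioo (0 : ℝ) η', ∀ x ∈ U, |g ω x| < δ) ∧
      (∀ ω ∈ Set.Ioo (0 : ℝ) η, ∀ x ∈ U,
        (matA n ρ c ω x).det =
          ω ^ (n * (n + 1) / 2) *
            ((∏ j : Fin (n + 1), ∏ j' ∈ Finset.Iio j,
                (sigmaNode ρ n j' - sigmaNode ρ n j)) + g ω x)) ∧
      ∃ ε₀ > (0 : ℝ), ε₀ ≤ η ∧ ∀ ω ∈ Set.Ioo (0 : ℝ) ε₀, ∀ x ∈ U,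
        IsUnit (matA n ρ c ω x) := by
  classical
  obtain ⟨hρ0, hρ1⟩ := hρ
  set σf : Fin (n+1) → ℝ := sigmaNode ρ n with hσf
  have hnR : (0:ℝ) < n := by positivity
  -- bounds on σ
  have hσ : ∀ ℓ, ρ ≤ σf ℓ ∧ σf ℓ ≤ 1 := by
    intro ℓ
    have hl : (ℓ.val : ℝ) ≤ n := by exact_mod_cast Nat.cast_le.mpr ℓ.is_le
    have h0l : (0:ℝ) ≤ (ℓ.val : ℝ) := Nat.cast_nonneg _
    have h1ρ : (0:ℝ) ≤ 1 - ρ := by linarith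
    constructor
    · have : (ℓ.val : ℝ) * (1 - ρ) / n ≤ (1 - ρ) := by
        rw [div_le_iff₀ hnR]
        nlinarith
      simp only [hσf, sigmaNode]; linarith
    · have : (0:ℝ) ≤ (ℓ.val : ℝ) * (1 - ρ) / n := by positivity
      simp only [hσf, sigmaNode]; linarith
  have hσpos : ∀ ℓ, 0 < σf ℓ := fun ℓ => lt_of_lt_of_le hρ0 (hσ ℓ).1
  have hσabs : ∀ ℓ, |σf ℓ| ≤ 1 := fun ℓ => by
    rw [abs_of_pos (hσpos ℓ)]; exact (hσ ℓ).2
  -- the Vandermonde value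
  set V : ℝ := ∏ j : Fin (n + 1), ∏ j' ∈ Finset.Iio j, (σf j' - σf j) with hVdef
  -- the rescaled matrix B
  set B : ℝ → α → Matrix (Fin (n+1)) (Fin (n+1)) ℝ := fun ω x =>
    Matrix.of fun ℓ k => (σf ℓ) ^ k.val *
      ((-1 : ℝ) ^ k.val + (ω * σf ℓ) ^ (n + 1 - k.val) * c ℓ k ω x) with hBdef
  -- the limit matrix
  set M0 : Matrix (Fin (n+1)) (Fin (n+1)) ℝ := Matrix.vandermonde (fun ℓ => -σf ℓ) with hM0def
  have hM0entry : ∀ ℓ k : Fin (n+1), M0 ℓ k = (σf ℓ) ^ k.val * (-1 : ℝ) ^ k.val := by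
    intro ℓ k
    simp [hM0def, Matrix.vandermonde]
    ring
  -- det M0 = V
  have hdetM0 : M0.det = V := by
    rw [hM0def, Matrix.det_vandermonde]
    have hswap : ∀ (f : Fin (n+1) → Fin (n+1) → ℝ),
        ∏ i : Fin (n+1), ∏ j ∈ Finset.Ioi i, f i j
          = ∏ j : Fin (n+1), ∏ i ∈ Finset.Iio j, f i j := by
      intro f
      exact Finset.prod_comm' (by intro x y; simp)
    rw [hswap]
    apply Finset.prod_congr rfl
    intro j _
    apply Finset.prod_congr rfl
    intro i _
    ring
  -- V > 0
  have hVpos : 0 < V := by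
    rw [hVdef]
    apply Finset.prod_pos
    intro j _
    apply Finset.prod_pos
    intro i hi
    have hij : (i : Fin (n+1)) < j := Finset.mem_Iio.mp hi
    have hval : (i.val : ℝ) < (j.val : ℝ) := by exact_mod_cast hij
    have : σf i - σf j = ((j.val : ℝ) - i.val) * (1 - ρ) / n := by
      simp only [hσf, sigmaNode]; ring
    rw [this]
    apply div_pos (mul_pos (by linarith) (by linarith)) hnR
  -- det A = ω^N det B
  have hN : (∑ k : Fin (n+1), k.val) = n * (n+1) / 2 := by
    rw [Fin.sum_univ_eq_sum_range (fun i => i), Finset.sum_range_id]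
    simp [Nat.mul_comm]
  have hdetA : ∀ ω : ℝ, ∀ x : α,
      (matA n ρ c ω x).det = ω ^ (n * (n+1) / 2) * (B ω x).det := by
    intro ω x
    have : matA n ρ c ω x = Matrix.of fun ℓ k => ω ^ k.val * B ω x ℓ k := by
      ext ℓ k
      simp only [matA, hBdef, Matrix.of_apply, mul_pow]
      ring
    rw [this, Matrix.det_mul_row, Finset.prod_pow_eq_pow_sum, hN]
  -- constants
  set C' : ℝ := max C 0 with hC'def
  have hC'0 : 0 ≤ C' := le_max_right _ _
  set E : ℝ := max 1 η with hEdef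
  have hE1 : (1:ℝ) ≤ E := le_max_left _ _
  set D : ℝ := E ^ n * C' with hDdef
  have hD0 : 0 ≤ D := by positivity
  set R : ℝ := 1 + η * D with hRdef
  have hR1 : (1:ℝ) ≤ R := by nlinarith
  set K : ℝ := (Fintype.card (Equiv.Perm (Fin (n+1))) : ℝ) * ((n+1) * R ^ (n+1)) * D
    with hKdef
  have hK0 : 0 ≤ K := by
    refine mul_nonneg (mul_nonneg (Nat.cast_nonneg _) ?_) hD0
    have : (0:ℝ) ≤ R := by linarith
    positivity
  -- entrywise bounds
  have hEntry : ∀ ω ∈ Set.Ioo (0:ℝ) η, ∀ x ∈ U, ∀ ℓ k : Fin (n+1),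
      |B ω x ℓ k - M0 ℓ k| ≤ D * ω ∧ |B ω x ℓ k| ≤ R ∧ |M0 ℓ k| ≤ R := by
    intro ω hω x hx ℓ k
    obtain ⟨hω0, hωη⟩ := hω
    have hck : |c ℓ k ω x| ≤ C' := le_trans (hc ℓ k ω ⟨hω0, hωη⟩ x hx) (le_max_left _ _)
    have hkn : k.val ≤ n := k.is_le
    have hdiff : B ω x ℓ k - M0 ℓ k
        = (σf ℓ) ^ k.val * (ω * σf ℓ) ^ (n + 1 - k.val) * c ℓ k ω x := by
      rw [hM0entry]
      simp only [hBdef, Matrix.of_apply]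
      ring
    have habsσk : |(σf ℓ) ^ k.val| ≤ 1 := by
      rw [abs_pow]; exact pow_le_one₀ (abs_nonneg _) (hσabs ℓ)
    have hωσ : |(ω * σf ℓ) ^ (n + 1 - k.val)| ≤ ω ^ (n + 1 - k.val) := by
      rw [abs_pow, abs_mul, abs_of_pos hω0]
      apply pow_le_pow_left₀ (by positivity)
      nlinarith [hσabs ℓ, abs_nonneg (σf ℓ)]
    have hωpow : ω ^ (n + 1 - k.val) ≤ E ^ n * ω := by
      have h1 : n + 1 - k.val = (n - k.val) + 1 := by omega
      rw [h1, pow_succ]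
      apply mul_le_mul_of_nonneg_right _ (le_of_lt hω0)
      calc ω ^ (n - k.val) ≤ E ^ (n - k.val) := by
            apply pow_le_pow_left₀ (le_of_lt hω0)
            exact le_trans (le_of_lt hωη) (le_max_right _ _)
        _ ≤ E ^ n := pow_le_pow_right₀ hE1 (by omega)
    have hd : |B ω x ℓ k - M0 ℓ k| ≤ D * ω := by
      rw [hdiff, abs_mul, abs_mul]
      calc |(σf ℓ) ^ k.val| * |(ω * σf ℓ) ^ (n + 1 - k.val)| * |c ℓ k ω x|
          ≤ 1 * (E ^ n * ω) * C' := by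
            apply mul_le_mul _ hck (abs_nonneg _) (by positivity)
            apply mul_le_mul habsσk (le_trans hωσ hωpow) (abs_nonneg _) zero_le_one
        _ = D * ω := by rw [hDdef]; ring
    have hM0b : |M0 ℓ k| ≤ R := by
      rw [hM0entry, abs_mul, abs_pow, abs_pow, abs_neg, abs_one, one_pow, mul_one]
      calc |σf ℓ| ^ k.val ≤ 1 := pow_le_one₀ (abs_nonneg _) (hσabs ℓ)
        _ ≤ R := hR1
    refine ⟨hd, ?_, hM0b⟩
    have : |B ω x ℓ k| ≤ |M0 ℓ k| + |B ω x ℓ k - M0 ℓ k| := by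
      have := abs_add_le (M0 ℓ k) (B ω x ℓ k - M0 ℓ k)
      simpa using this
    calc |B ω x ℓ k| ≤ |M0 ℓ k| + |B ω x ℓ k - M0 ℓ k| := this
      _ ≤ 1 + D * ω := by
          apply add_le_add _ hd
          rw [hM0entry, abs_mul, abs_pow, abs_pow, abs_neg, abs_one, one_pow, mul_one]
          exact pow_le_one₀ (abs_nonneg _) (hσabs ℓ)
      _ ≤ R := by rw [hRdef]; nlinarith [hω0.le, hωη.le, hD0]
  -- main estimate : |det B - V| ≤ K ω
  have hest : ∀ ω ∈ Set.Ioo (0:ℝ) η, ∀ x ∈ U, |(B ω x).det - V| ≤ K * ω := by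
    intro ω hω x hx
    rw [← hdetM0, Matrix.det_apply', Matrix.det_apply', ← Finset.sum_sub_distrib]
    have hterm : ∀ τ : Equiv.Perm (Fin (n+1)),
        |(↑↑(Equiv.Perm.sign τ) * ∏ i : Fin (n+1), B ω x (τ i) i)
          - ↑↑(Equiv.Perm.sign τ) * ∏ i : Fin (n+1), M0 (τ i) i|
          ≤ ((n+1) * R ^ (n+1)) * (D * ω) := by
      intro τ
      have hsign : |((Equiv.Perm.sign τ : ℤ) : ℝ)| = 1 := by
        rcases Int.units_eq_one_or (Equiv.Perm.sign τ) with h | h <;> simp [h]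
      rw [← mul_sub, abs_mul, hsign, one_mul]
      have := prod_sub_prod_bound Finset.univ
        (fun i => B ω x (τ i) i) (fun i => M0 (τ i) i) R (D * ω)
        hR1 (by nlinarith [hω.1.le, hD0])
        (fun i _ => (hEntry ω hω x hx (τ i) i).2.1)
        (fun i _ => (hEntry ω hω x hx (τ i) i).2.2)
        (fun i _ => (hEntry ω hω x hx (τ i) i).1)
      simpa using this
    calc |∑ τ : Equiv.Perm (Fin (n+1)),
            ((↑↑(Equiv.Perm.sign τ) * ∏ i : Fin (n+1), B ω x (τ i) i)
              - ↑↑(Equiv.Perm.sign τ) * ∏ i : Fin (n+1), M0 (τ i) i)|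
        ≤ ∑ τ : Equiv.Perm (Fin (n+1)),
            |(↑↑(Equiv.Perm.sign τ) * ∏ i : Fin (n+1), B ω x (τ i) i)
              - ↑↑(Equiv.Perm.sign τ) * ∏ i : Fin (n+1), M0 (τ i) i| :=
          Finset.abs_sum_le_sum_abs _ _
      _ ≤ ∑ _τ : Equiv.Perm (Fin (n+1)), ((n+1) * R ^ (n+1)) * (D * ω) :=
          Finset.sum_le_sum (fun τ _ => hterm τ)
      _ = K * ω := by
          rw [Finset.sum_const, Finset.card_univ, hKdef]
          push_cast
          ring
  -- define g
  set g : ℝ → α → ℝ := fun ω x =>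
    if ω ∈ Set.Ioo (0:ℝ) η ∧ x ∈ U then (B ω x).det - V else 0 with hgdef
  have hgbound : ∀ δ > (0:ℝ), ∃ η' > (0:ℝ),
      ∀ ω ∈ Set.Ioo (0:ℝ) η', ∀ x ∈ U, |g ω x| < δ := by
    intro δ hδ
    refine ⟨min η (δ / (K + 1)), lt_min hη (div_pos hδ (by linarith)), ?_⟩
    intro ω hω x hx
    obtain ⟨hω0, hωm⟩ := hω
    by_cases hcase : ω ∈ Set.Ioo (0:ℝ) η ∧ x ∈ U
    · have h1 : |g ω x| ≤ K * ω := by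
        rw [hgdef]; simp only [if_pos hcase]
        exact hest ω hcase.1 x hx
      have h2 : ω < δ / (K + 1) := lt_of_lt_of_le hωm (min_le_right _ _)
      calc |g ω x| ≤ K * ω := h1
        _ ≤ (K + 1) * ω := by nlinarith
        _ < (K + 1) * (δ / (K + 1)) := by
            apply mul_lt_mul_of_pos_left h2 (by linarith)
        _ = δ := by field_simp
    · rw [hgdef]; simp only [if_neg hcase, abs_zero]; exact hδ
  have hgdet : ∀ ω ∈ Set.Ioo (0:ℝ) η, ∀ x ∈ U,
      (matA n ρ c ω x).det = ω ^ (n * (n+1) / 2) * (V + g ω x) := by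
    intro ω hω x hx
    rw [hdetA ω x, hgdef]
    simp only [if_pos (And.intro hω hx)]
    ring
  refine ⟨g, hgbound, hgdet, ?_⟩
  obtain ⟨η', hη'0, hη'⟩ := hgbound V hVpos
  refine ⟨min η η', lt_min hη hη'0, min_le_left _ _, ?_⟩
  intro ω hω x hx
  obtain ⟨hω0, hωm⟩ := hω
  have hωη : ω ∈ Set.Ioo (0:ℝ) η := ⟨hω0, lt_of_lt_of_le hωm (min_le_left _ _)⟩
  have hωη' : ω ∈ Set.Ioo (0:ℝ) η' := ⟨hω0, lt_of_lt_of_le hωm (min_le_right _ _)⟩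
  rw [Matrix.isUnit_iff_isUnit_det, isUnit_iff_ne_zero, hgdet ω hωη x hx]
  have hg := hη' ω hωη' x hx
  have hpos : 0 < V + g ω x := by
    have := abs_lt.mp hg
    linarith [this.1]
  exact (mul_pos (pow_pos hω0 _) hpos).ne'
end

section
/- For the linear control system q̇ = Aq + Bw, the rank of the secondary distribution D^{II} (spanned by the W_α = ∂/∂w^α together with all iterated brackets ad_𝕋^k(W_α), k ≥ 1) at every point of M = ℝ × ℝ^n × ℝ^m is m + rank[B, AB, A²B, …, A^{n−1}B]; in particular D^{II} is a regular distribution whose rank is constant and is determined by the Kalman controllability matrix. -/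
/-- The Lie bracket `[X, Y] = X(Y) - Y(X)` of vector fields (in coordinates). -/
noncomputable def lieBracket {E : Type*} [NormedAddCommGroup E] [NormedSpace ℝ E]
    (X Y : E → E) : E → E := fun x => fderiv ℝ Y x (X x) - fderiv ℝ X x (Y x)

/-- The drift vector field `𝕋 = ∂/∂t + (Aq + Bw)^i ∂/∂q^i` of the linear control
system `q̇ = Aq + Bw` on `M = ℝ × ℝ^n × ℝ^m`. -/
noncomputable def Tlin {n m : ℕ} (A : Matrix (Fin n) (Fin n) ℝ)
    (B : Matrix (Fin n) (Fin m) ℝ) :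
    ℝ × (Fin n → ℝ) × (Fin m → ℝ) → ℝ × (Fin n → ℝ) × (Fin m → ℝ) :=
  fun x => (1, A.mulVec x.2.1 + B.mulVec x.2.2, 0)

/-- The control vector field `W_α = ∂/∂w^α`. -/
noncomputable def Wlin (n m : ℕ) (α : Fin m) :
    ℝ × (Fin n → ℝ) × (Fin m → ℝ) → ℝ × (Fin n → ℝ) × (Fin m → ℝ) :=
  fun _ => (0, 0, Pi.single α 1)

section Aux

variable {n m : ℕ} (A : Matrix (Fin n) (Fin n) ℝ) (B : Matrix (Fin n) (Fin m) ℝ)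

/-- The linear part of `Tlin`. -/
def Llin : (ℝ × (Fin n → ℝ) × (Fin m → ℝ)) →ₗ[ℝ] (ℝ × (Fin n → ℝ) × (Fin m → ℝ)) where
  toFun x := (0, A.mulVec x.2.1 + B.mulVec x.2.2, 0)
  map_add' x y := by
    simp only [Prod.fst_add, Prod.snd_add, Matrix.mulVec_add, Prod.mk_add_mk, add_zero,
      Prod.mk.injEq]
    refine ⟨trivial, ?_, trivial⟩
    abel
  map_smul' c x := by
    simp only [Prod.smul_fst, Prod.smul_snd, Matrix.mulVec_smul, RingHom.id_apply,
      Prod.smul_mk, smul_zero, smul_add]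

lemma fderiv_Tlin (x : ℝ × (Fin n → ℝ) × (Fin m → ℝ)) :
    fderiv ℝ (Tlin A B) x = (Llin A B).toContinuousLinearMap := by
  have h : Tlin A B = fun y => ((1 : ℝ), (0 : Fin n → ℝ), (0 : Fin m → ℝ)) +
      (Llin A B).toContinuousLinearMap y := by
    funext y
    simp [Tlin, Llin, Prod.mk_add_mk]
  rw [h]
  exact ((Llin A B).toContinuousLinearMap.hasFDerivAt.const_add _).fderiv

/-- Bracketing a constant field of the form `(0, v, 0)` with `𝕋`. -/
lemma bracket_const (v : Fin n → ℝ) :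
    lieBracket (Tlin A B) (fun _ => ((0 : ℝ), v, (0 : Fin m → ℝ))) =
      fun _ => ((0 : ℝ), -(A.mulVec v), (0 : Fin m → ℝ)) := by
  funext x
  simp only [lieBracket, fderiv_const, Pi.zero_apply, ContinuousLinearMap.zero_apply,
    fderiv_Tlin, LinearMap.coe_toContinuousLinearMap']
  simp [Llin, Prod.ext_iff]

lemma iter_bracket (k : ℕ) (α : Fin m) :
    (lieBracket (Tlin A B))^[k + 1] (Wlin n m α) =
      fun _ => ((0 : ℝ), ((-1 : ℝ)) ^ (k + 1) • (A ^ k * B).mulVec (Pi.single α 1),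
        (0 : Fin m → ℝ)) := by
  induction k with
  | zero =>
    rw [Function.iterate_one]
    funext x
    have hW : fderiv ℝ (Wlin n m α) x = 0 := by
      rw [show Wlin n m α = fun _ : ℝ × (Fin n → ℝ) × (Fin m → ℝ) =>
        ((0 : ℝ), (0 : Fin n → ℝ), Pi.single α (1 : ℝ)) from rfl]
      exact fderiv_const_apply _
    simp only [lieBracket, hW, ContinuousLinearMap.zero_apply,
      fderiv_Tlin, LinearMap.coe_toContinuousLinearMap']
    simp [Llin, Wlin, Prod.ext_iff, pow_zero, Matrix.one_mul]
  | succ k ih =>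
    rw [Function.iterate_succ_apply', ih]
    have h := bracket_const A B (((-1 : ℝ)) ^ (k + 1) • (A ^ k * B).mulVec (Pi.single α 1))
    rw [h]
    funext x
    have : -(A.mulVec (((-1 : ℝ)) ^ (k + 1) • (A ^ k * B).mulVec (Pi.single α 1))) =
        ((-1 : ℝ)) ^ (k + 1 + 1) • (A ^ (k + 1) * B).mulVec (Pi.single α 1) := by
      rw [Matrix.mulVec_smul, Matrix.mulVec_mulVec, ← Matrix.mul_assoc, ← pow_succ']
      rw [pow_succ]
      module
    rw [this]

/-- Cayley–Hamilton: every power of `A` lies in the span of `A^j`, `j < n`. -/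
lemma pow_mem_span (k : ℕ) :
    A ^ k ∈ Submodule.span ℝ {M : Matrix (Fin n) (Fin n) ℝ | ∃ j, j < n ∧ M = A ^ j} := by
  rcases Nat.eq_zero_or_pos n with hn | hn
  · subst hn
    have : A ^ k = 0 := Subsingleton.elim _ _
    rw [this]; exact Submodule.zero_mem _
  · have hmonic : A.charpoly.Monic := A.charpoly_monic
    have hdeg : A.charpoly.natDegree = n := by
      simpa using A.charpoly_natDegree_eq_dim
    have hrdeg : ((Polynomial.X : Polynomial ℝ) ^ k %ₘ A.charpoly).natDegree < n := by
      rcases eq_or_ne ((Polynomial.X : Polynomial ℝ) ^ k %ₘ A.charpoly) 0 with h0 | h0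
      · rw [h0]; simpa using hn
      · have := Polynomial.degree_modByMonic_lt ((Polynomial.X : Polynomial ℝ) ^ k) hmonic
        have := Polynomial.natDegree_lt_natDegree h0 this
        omega
    have key : A ^ k = Polynomial.aeval A ((Polynomial.X : Polynomial ℝ) ^ k %ₘ A.charpoly) := by
      conv_lhs => rw [show A ^ k = Polynomial.aeval A ((Polynomial.X : Polynomial ℝ) ^ k) by
        simp]
      conv_lhs => rw [← Polynomial.modByMonic_add_div ((Polynomial.X : Polynomial ℝ) ^ k) A.charpoly]
      rw [map_add, map_mul, A.aeval_self_charpoly, zero_mul, add_zero]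
    rw [key, Polynomial.aeval_eq_sum_range' hrdeg]
    apply Submodule.sum_mem
    intro i hi
    exact Submodule.smul_mem _ _ (Submodule.subset_span ⟨i, Finset.mem_range.mp hi, rfl⟩)

lemma col_mem_span (k : ℕ) (α : Fin m) :
    (A ^ k * B).mulVec (Pi.single α 1) ∈ Submodule.span ℝ
      {w : Fin n → ℝ | ∃ j : ℕ, j < n ∧ ∃ β : Fin m, w = fun i => (A ^ j * B) i β} := by
  have h := pow_mem_span A k
  refine Submodule.span_induction
    (p := fun M _ => (M * B).mulVec (Pi.single α 1) ∈ Submodule.span ℝ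
      {w : Fin n → ℝ | ∃ j : ℕ, j < n ∧ ∃ β : Fin m, w = fun i => (A ^ j * B) i β})
    ?_ ?_ ?_ ?_ h
  · rintro M ⟨j, hj, rfl⟩
    apply Submodule.subset_span
    refine ⟨j, hj, α, ?_⟩
    rw [Matrix.mulVec_single_one]
    rfl
  · show ((0 : Matrix (Fin n) (Fin n) ℝ) * B).mulVec (Pi.single α 1) ∈ Submodule.span ℝ
      {w : Fin n → ℝ | ∃ j : ℕ, j < n ∧ ∃ β : Fin m, w = fun i => (A ^ j * B) i β}
    rw [Matrix.zero_mul, Matrix.zero_mulVec]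
    exact Submodule.zero_mem _
  · intro M N _ _ hM hN
    rw [Matrix.add_mul, Matrix.add_mulVec]
    exact Submodule.add_mem _ hM hN
  · intro c M _ hM
    rw [Matrix.smul_mul, Matrix.smul_mulVec]
    exact Submodule.smul_mem _ _ hM

/-- A product of submodules is linearly equivalent to the product of the submodules. -/
def prodEquivAux {R M N : Type*} [CommRing R] [AddCommGroup M] [AddCommGroup N]
    [Module R M] [Module R N] (p : Submodule R M) (q : Submodule R N) :
    (p.prod q) ≃ₗ[R] p × q where
  toFun x := (⟨x.1.1, x.2.1⟩, ⟨x.1.2, x.2.2⟩)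
  invFun x := ⟨(x.1.1, x.2.1), ⟨x.1.2, x.2.2⟩⟩
  map_add' x y := rfl
  map_smul' c x := rfl
  left_inv x := rfl
  right_inv x := rfl

lemma finrank_prod_submodule {M N : Type*} [AddCommGroup M] [AddCommGroup N]
    [Module ℝ M] [Module ℝ N] [FiniteDimensional ℝ M] [FiniteDimensional ℝ N]
    (p : Submodule ℝ M) (q : Submodule ℝ N) :
    Module.finrank ℝ (p.prod q) = Module.finrank ℝ p + Module.finrank ℝ q := by
  rw [(prodEquivAux p q).finrank_eq, Module.finrank_prod]

end Aux

/-- For the linear system `q̇ = Aq + Bw`, the secondary distribution `D^{II}`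
(spanned at each point by the `W_α` and all iterated brackets `ad_𝕋^k(W_α)`, `k ≥ 1`)
has constant rank `m + rank [B, AB, …, A^{n−1}B]` (the Kalman controllability rank);
in particular it is a regular distribution. -/
theorem stmt_14 (n m : ℕ) (A : Matrix (Fin n) (Fin n) ℝ) (B : Matrix (Fin n) (Fin m) ℝ) :
    ∀ x : ℝ × (Fin n → ℝ) × (Fin m → ℝ),
      Module.finrank ℝ
          (Submodule.span ℝ
            {v : ℝ × (Fin n → ℝ) × (Fin m → ℝ) |
              (∃ α : Fin m, v = Wlin n m α x) ∨
                ∃ k : ℕ, 1 ≤ k ∧ ∃ α : Fin m,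
                  v = ((lieBracket (Tlin A B))^[k] (Wlin n m α)) x}) =
        m + Module.finrank ℝ
          (Submodule.span ℝ
            {w : Fin n → ℝ | ∃ k : ℕ, k < n ∧ ∃ α : Fin m,
              w = fun i => (A ^ k * B) i α}) := by
  intro x
  set V : Submodule ℝ (Fin n → ℝ) := Submodule.span ℝ
    {w : Fin n → ℝ | ∃ k : ℕ, k < n ∧ ∃ α : Fin m, w = fun i => (A ^ k * B) i α} with hV
  set S : Set (ℝ × (Fin n → ℝ) × (Fin m → ℝ)) :=
    {v | (∃ α : Fin m, v = Wlin n m α x) ∨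
      ∃ k : ℕ, 1 ≤ k ∧ ∃ α : Fin m, v = ((lieBracket (Tlin A B))^[k] (Wlin n m α)) x} with hS
  have hspan : Submodule.span ℝ S =
      (⊥ : Submodule ℝ ℝ).prod (V.prod (⊤ : Submodule ℝ (Fin m → ℝ))) := by
    apply le_antisymm
    · rw [Submodule.span_le]
      rintro v (⟨α, rfl⟩ | ⟨k, hk, α, rfl⟩)
      · exact Submodule.mem_prod.mpr ⟨Submodule.mem_bot ℝ |>.mpr rfl,
          Submodule.mem_prod.mpr ⟨Submodule.zero_mem V, trivial⟩⟩
      · obtain ⟨j, rfl⟩ : ∃ j, k = j + 1 := ⟨k - 1, by omega⟩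
        rw [iter_bracket A B j α]
        exact Submodule.mem_prod.mpr ⟨Submodule.mem_bot ℝ |>.mpr rfl,
          Submodule.mem_prod.mpr
            ⟨Submodule.smul_mem V _ (col_mem_span A B j α), trivial⟩⟩
    · rintro ⟨v1, v2, v3⟩ hv
      rw [Submodule.mem_prod] at hv
      obtain ⟨hv1, hv23⟩ := hv
      rw [Submodule.mem_prod] at hv23
      obtain ⟨hv2, -⟩ := hv23
      simp only [Submodule.mem_bot] at hv1
      subst hv1
      have hsplit : ((0 : ℝ), v2, v3) = ((0 : ℝ), v2, (0 : Fin m → ℝ)) +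
          ((0 : ℝ), (0 : Fin n → ℝ), v3) := by
        simp [Prod.ext_iff]
      rw [hsplit]
      apply Submodule.add_mem
      · -- (0, v2, 0) with v2 ∈ V
        refine Submodule.span_induction
          (p := fun u _ => ((0 : ℝ), u, (0 : Fin m → ℝ)) ∈ Submodule.span ℝ S)
          ?_ ?_ ?_ ?_ hv2
        · rintro u ⟨k, hk, α, rfl⟩
          have hmem : ((lieBracket (Tlin A B))^[k + 1] (Wlin n m α)) x ∈ Submodule.span ℝ S :=
            Submodule.subset_span (Or.inr ⟨k + 1, by omega, α, rfl⟩)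
          rw [iter_bracket A B k α] at hmem
          have := Submodule.smul_mem _ (((-1 : ℝ)) ^ (k + 1)) hmem
          have heq : ((-1 : ℝ)) ^ (k + 1) • (((0 : ℝ),
              ((-1 : ℝ)) ^ (k + 1) • (A ^ k * B).mulVec (Pi.single α 1), (0 : Fin m → ℝ))) =
              ((0 : ℝ), (fun i => (A ^ k * B) i α), (0 : Fin m → ℝ)) := by
            have h1 : ((-1 : ℝ)) ^ (k + 1) • (((-1 : ℝ)) ^ (k + 1) •
                (A ^ k * B).mulVec (Pi.single α 1)) = (A ^ k * B).mulVec (Pi.single α 1) := by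
              rw [smul_smul, ← pow_add]
              rw [Even.neg_one_pow ⟨k + 1, by ring⟩, one_smul]
            rw [Prod.smul_mk, Prod.smul_mk, h1, smul_zero, smul_zero,
              Matrix.mulVec_single_one]
            rfl
          rw [heq] at this
          exact this
        · exact Submodule.zero_mem (Submodule.span ℝ S)
        · intro u w _ _ hu hw
          have := Submodule.add_mem _ hu hw
          simpa [Prod.ext_iff] using this
        · intro c u _ hu
          have := Submodule.smul_mem _ c hu
          simpa [Prod.smul_mk] using this
      · -- (0, 0, v3)
        have hv3 : ((0 : ℝ), (0 : Fin n → ℝ), v3) =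
            ∑ α : Fin m, v3 α • (((0 : ℝ), (0 : Fin n → ℝ), (Pi.single α 1 : Fin m → ℝ)) :
              ℝ × (Fin n → ℝ) × (Fin m → ℝ)) := by
          have : v3 = ∑ α : Fin m, v3 α • (Pi.single α 1 : Fin m → ℝ) := by
            ext i
            simp [Pi.single_apply, Finset.sum_apply, mul_comm]
          conv_lhs => rw [this]
          simp [Prod.smul_mk, Prod.fst_sum, Prod.snd_sum, Prod.ext_iff]
        rw [hv3]
        apply Submodule.sum_mem
        intro α _
        exact Submodule.smul_mem _ _ (Submodule.subset_span (Or.inl ⟨α, rfl⟩))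
  rw [hspan, finrank_prod_submodule, finrank_prod_submodule, finrank_bot,
    finrank_top, Module.finrank_fin_fun]
  ring
end
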